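/- Let f(u, y) := ‖y − y_ref‖²_Q + g(u) + λ‖y − ŷ_SPC(ξ,u)‖²_{Q_reg} where Q ⪰ 0, Q_reg ≻ 0, λ > 0, g : ℝᵐ → ℝ arbitrary, and ŷ_SPC affine in u. Let ŷ_DPC(u) := (λQ_reg + Q)⁻¹(λQ_reg ŷ_SPC(ξ,u) + Q y_ref). Then for any set U ⊆ ℝᵐ: (u*, y*) minimizes f over U × ℝᵖ if and only if u* minimizes u ↦ f(u, ŷ_DPC(u)) over U and y* = ŷ_DPC(u*). In particular, the optimal values of the two problems coincide. -/

import Mathlib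

/-!
For fixed `u` the cost is `g u` plus a quadratic in `y` with Hessian `2 (λ Q_reg + Q) ≻ 0`;
completing the square shows that `ŷ_DPC(u)` is its unique minimizer. Minimizing jointly over
`(u, y)` therefore amounts to minimizing over `u` with `y = ŷ_DPC(u)` substituted, whatever the
constraint set `U` and the input cost `g` are.
-/

open Matrix

section PartialMinimization

variable {α β γ : Type*} {f : α → β → γ} {y₀ : α → β}

theorem minimizes_iff_of_unique_argmin [Preorder γ]
    (hle : ∀ u y, f u (y₀ u) ≤ f u y) (heq : ∀ u y, f u y ≤ f u (y₀ u) → y = y₀ u)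
    (U : Set α) (u' : α) (y' : β) :
    (u' ∈ U ∧ ∀ u ∈ U, ∀ y, f u' y' ≤ f u y) ↔
      (u' ∈ U ∧ (∀ u ∈ U, f u' (y₀ u') ≤ f u (y₀ u)) ∧ y' = y₀ u') := by
  constructor
  · rintro ⟨hu', hmin⟩
    obtain rfl : y' = y₀ u' := heq u' y' (hmin u' hu' _)
    exact ⟨hu', fun u hu => hmin u hu _, rfl⟩
  · rintro ⟨hu', hmin, rfl⟩
    exact ⟨hu', fun u hu y => (hmin u hu).trans (hle u y)⟩

theorem sInf_eq_sInf_of_argmin [ConditionallyCompleteLinearOrder γ]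
    (hle : ∀ u y, f u (y₀ u) ≤ f u y) (U : Set α) :
    sInf {v | ∃ u ∈ U, ∃ y, v = f u y} = sInf {v | ∃ u ∈ U, v = f u (y₀ u)} :=
  csInf_eq_csInf_of_forall_exists_le
    (by rintro _ ⟨u, hu, y, rfl⟩; exact ⟨_, ⟨u, hu, rfl⟩, hle u y⟩)
    (by rintro _ ⟨u, hu, rfl⟩; exact ⟨_, ⟨u, hu, _, rfl⟩, le_rfl⟩)

end PartialMinimization

section RegularizedCost

variable {n : Type*} [Fintype n] {Q R : Matrix n n ℝ} {lam : ℝ}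

def regularizedCost (Q R : Matrix n n ℝ) (lam : ℝ) (r s y : n → ℝ) : ℝ :=
  (y - r) ⬝ᵥ (Q *ᵥ (y - r)) + lam * ((y - s) ⬝ᵥ (R *ᵥ (y - s)))

theorem Matrix.IsSymm.add_dotProduct_mulVec_add {M : Matrix n n ℝ} (hM : M.IsSymm)
    (x w : n → ℝ) :
    (x + w) ⬝ᵥ (M *ᵥ (x + w)) = x ⬝ᵥ (M *ᵥ x) + 2 * (w ⬝ᵥ (M *ᵥ x)) + w ⬝ᵥ (M *ᵥ w) := by
  have hsymm : x ⬝ᵥ (M *ᵥ w) = w ⬝ᵥ (M *ᵥ x) := by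
    rw [dotProduct_mulVec, ← mulVec_transpose, hM.eq, dotProduct_comm]
  simp only [mulVec_add, dotProduct_add, add_dotProduct, hsymm]
  ring

theorem regularizedCost_eq_add_of_mulVec_eq (hQ : Q.IsSymm) (hR : R.IsSymm) {r s y₀ : n → ℝ}
    (hy₀ : (lam • R + Q) *ᵥ y₀ = lam • (R *ᵥ s) + Q *ᵥ r) (y : n → ℝ) :
    regularizedCost Q R lam r s y =
      regularizedCost Q R lam r s y₀ + (y - y₀) ⬝ᵥ ((lam • R + Q) *ᵥ (y - y₀)) := by
  set w := y - y₀ with hw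
  have hstat : w ⬝ᵥ (Q *ᵥ (y₀ - r)) + lam * (w ⬝ᵥ (R *ᵥ (y₀ - s))) = 0 := by
    have h := congrArg (w ⬝ᵥ ·) hy₀
    simp only [add_mulVec, smul_mulVec, dotProduct_add, dotProduct_smul, smul_eq_mul] at h
    simp only [mulVec_sub, dotProduct_sub]
    linear_combination h
  have hr : y - r = (y₀ - r) + w := by rw [hw]; abel
  have hs : y - s = (y₀ - s) + w := by rw [hw]; abel
  simp only [regularizedCost, hr, hs, hQ.add_dotProduct_mulVec_add, hR.add_dotProduct_mulVec_add,
    add_mulVec, smul_mulVec, dotProduct_add, dotProduct_smul, smul_eq_mul]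
  linear_combination 2 * hstat

variable [DecidableEq n]

noncomputable def implicitPredictor (Q R : Matrix n n ℝ) (lam : ℝ) (r s : n → ℝ) : n → ℝ :=
  (lam • R + Q)⁻¹ *ᵥ (lam • (R *ᵥ s) + Q *ᵥ r)

theorem regularizedCost_eq_add (hQ : Q.PosSemidef) (hR : R.PosDef) (hlam : 0 < lam)
    (r s y : n → ℝ) :
    regularizedCost Q R lam r s y =
      regularizedCost Q R lam r s (implicitPredictor Q R lam r s) +
        (y - implicitPredictor Q R lam r s) ⬝ᵥ
          ((lam • R + Q) *ᵥ (y - implicitPredictor Q R lam r s)) := by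
  have hA : (lam • R + Q).PosDef := (hR.smul hlam).add_posSemidef hQ
  refine regularizedCost_eq_add_of_mulVec_eq (isHermitian_iff_isSymm.mp hQ.1)
    (isHermitian_iff_isSymm.mp hR.1) ?_ y
  rw [implicitPredictor, mulVec_mulVec,
    mul_nonsing_inv _ ((isUnit_iff_isUnit_det _).mp hA.isUnit), one_mulVec]

theorem regularizedCost_implicitPredictor_le (hQ : Q.PosSemidef) (hR : R.PosDef)
    (hlam : 0 < lam) (r s y : n → ℝ) :
    regularizedCost Q R lam r s (implicitPredictor Q R lam r s) ≤
      regularizedCost Q R lam r s y := by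
  rw [regularizedCost_eq_add hQ hR hlam r s y, le_add_iff_nonneg_right]
  exact ((hR.smul hlam).add_posSemidef hQ).posSemidef.dotProduct_mulVec_nonneg _

theorem eq_implicitPredictor_of_regularizedCost_le (hQ : Q.PosSemidef) (hR : R.PosDef)
    (hlam : 0 < lam) {r s y : n → ℝ}
    (hy : regularizedCost Q R lam r s y ≤
      regularizedCost Q R lam r s (implicitPredictor Q R lam r s)) :
    y = implicitPredictor Q R lam r s := by
  rw [regularizedCost_eq_add hQ hR hlam r s y, add_le_iff_nonpos_right] at hy
  by_contra hne
  exact hy.not_gt (((hR.smul hlam).add_posSemidef hQ).dotProduct_mulVec_pos (sub_ne_zero.mpr hne))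

end RegularizedCost

theorem stmt_12_general (p m : ℕ) (Q Qreg : Matrix (Fin p) (Fin p) ℝ)
    (hQ : Q.PosSemidef) (hQreg : Qreg.PosDef)
    (lam : ℝ) (hlam : 0 < lam) (g : (Fin m → ℝ) → ℝ)
    (yspc : (Fin m → ℝ) → (Fin p → ℝ))
    (yref : Fin p → ℝ) :
    let f : (Fin m → ℝ) → (Fin p → ℝ) → ℝ :=
      fun u y => (y - yref) ⬝ᵥ (Q *ᵥ (y - yref)) + g u
        + lam * ((y - yspc u) ⬝ᵥ (Qreg *ᵥ (y - yspc u)))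
    let ydpc : (Fin m → ℝ) → (Fin p → ℝ) :=
      fun u => (lam • Qreg + Q)⁻¹ *ᵥ (lam • (Qreg *ᵥ yspc u) + Q *ᵥ yref)
    ∀ U : Set (Fin m → ℝ),
      (∀ (ustar : Fin m → ℝ) (ystar : Fin p → ℝ),
        (ustar ∈ U ∧ ∀ u ∈ U, ∀ y : Fin p → ℝ, f ustar ystar ≤ f u y)
          ↔ (ustar ∈ U ∧ (∀ u ∈ U, f ustar (ydpc ustar) ≤ f u (ydpc u)) ∧
              ystar = ydpc ustar)) ∧
      sInf {v : ℝ | ∃ u ∈ U, ∃ y : Fin p → ℝ, v = f u y}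
        = sInf {v : ℝ | ∃ u ∈ U, v = f u (ydpc u)} := by
  intro f ydpc U
  have hf : ∀ u y, f u y = regularizedCost Q Qreg lam yref (yspc u) y + g u := by
    intro u y
    simp only [f, regularizedCost]
    ring
  have hle : ∀ u y, f u (ydpc u) ≤ f u y := fun u y => by
    rw [hf, hf]
    exact add_le_add_left (regularizedCost_implicitPredictor_le hQ hQreg hlam _ _ y) _
  have heq : ∀ u y, f u y ≤ f u (ydpc u) → y = ydpc u := fun u y hy => by
    rw [hf, hf, add_le_add_iff_right] at hy
    exact eq_implicitPredictor_of_regularizedCost_le hQ hQreg hlam hy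
  exact ⟨minimizes_iff_of_unique_argmin hle heq U, sInf_eq_sInf_of_argmin hle U⟩

/-- Enforcing the implicit predictor `y = ŷ_DPC(u)` as an explicit constraint
does not alter minimizers or optimal value of the regularized DPC problem,
for arbitrary input constraints `U` and arbitrary input cost `g`. -/
theorem stmt_12 (p m : ℕ) (Q Qreg : Matrix (Fin p) (Fin p) ℝ)
    (hQs : Q.IsSymm) (hQregs : Qreg.IsSymm)
    (hQ : Q.PosSemidef) (hQreg : Qreg.PosDef)
    (lam : ℝ) (hlam : 0 < lam) (g : (Fin m → ℝ) → ℝ)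
    (yspc : (Fin m → ℝ) → (Fin p → ℝ))
    (haff : ∃ (B : Matrix (Fin p) (Fin m) ℝ) (c : Fin p → ℝ),
        ∀ u, yspc u = B *ᵥ u + c)
    (yref : Fin p → ℝ) :
    let f : (Fin m → ℝ) → (Fin p → ℝ) → ℝ :=
      fun u y => (y - yref) ⬝ᵥ (Q *ᵥ (y - yref)) + g u
        + lam * ((y - yspc u) ⬝ᵥ (Qreg *ᵥ (y - yspc u)))
    let ydpc : (Fin m → ℝ) → (Fin p → ℝ) :=
      fun u => (lam • Qreg + Q)⁻¹ *ᵥ (lam • (Qreg *ᵥ yspc u) + Q *ᵥ yref)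
    ∀ U : Set (Fin m → ℝ),
      (∀ (ustar : Fin m → ℝ) (ystar : Fin p → ℝ),
        (ustar ∈ U ∧ ∀ u ∈ U, ∀ y : Fin p → ℝ, f ustar ystar ≤ f u y)
          ↔ (ustar ∈ U ∧ (∀ u ∈ U, f ustar (ydpc ustar) ≤ f u (ydpc u)) ∧
              ystar = ydpc ustar)) ∧
      sInf {v : ℝ | ∃ u ∈ U, ∃ y : Fin p → ℝ, v = f u y}
        = sInf {v : ℝ | ∃ u ∈ U, v = f u (ydpc u)} :=
  stmt_12_general p m Q Qreg hQ hQreg lam hlam g yspc yref
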